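/- (Proximal point method, strongly monotone case.) Let η ∈ ℝⁿ be a positive vector and let F : ℝⁿ → ℝⁿ be continuously differentiable with μ_{∞,η⁻¹}(−DF(x)) ≤ −c for all x ∈ ℝⁿ, where c > 0. Let x* be the unique zero of F, let α > 0, and let (x_k) be any sequence satisfying x_{k+1} + αF(x_{k+1}) = x_k for all k. Then ‖x_{k+1} − x*‖_{∞,η⁻¹} ≤ (1/(1 + αc)) ‖x_k − x*‖_{∞,η⁻¹} for all k; consequently x_k → x* as k → ∞. -/

import Mathlib

open Filter

/-- Diagonally weighted ℓ∞ norm: ‖x‖_{∞,η⁻¹} = max_i |x_i|/η_i. -/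
noncomputable def wNorm {n : ℕ} (η x : Fin n → ℝ) : ℝ := ⨆ i, |x i| / η i

/-- Diagonally weighted ℓ∞ logarithmic norm of a matrix. -/
noncomputable def logNorm {n : ℕ} (η : Fin n → ℝ) (A : Matrix (Fin n) (Fin n) ℝ) : ℝ :=
  ⨆ i, (A i i + ∑ j ∈ Finset.univ.erase i, (η j / η i) * |A i j|)

/-- Jacobian matrix of `F` at `x`: (DF(x))_{ij} = ∂F_i/∂x_j. -/
noncomputable def jac {n : ℕ} (F : (Fin n → ℝ) → (Fin n → ℝ)) (x : Fin n → ℝ) :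
    Matrix (Fin n) (Fin n) ℝ :=
  fun i j => fderiv ℝ F x (Pi.single j 1) i

/-!
For `y z : ℝⁿ` let `u = y - z` and let `i` be a coordinate where `|u i| / η i` attains
`‖u‖_{∞,η⁻¹}`. The row condition encoded by `μ_{∞,η⁻¹}(-DF) ≤ -c` gives `c * u i ^ 2 ≤ u i * (DF(w) u) i`
for every `w`, and the mean value theorem along the segment from `z` to `y` turns this into
`c * u i ^ 2 ≤ u i * (F y - F z) i`. Hence the `i`-th coordinate of `u + α (F y - F z)` has
modulus at least `(1 + α c) |u i|`, i.e. `Id + αF` expands the weighted norm by `1 + α c`.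
Applied to `x_{k+1}` and the zero `x*`, this is the contraction estimate, and geometric decay
gives convergence.
-/

section WeightedNorm

variable {n : ℕ} {η : Fin n → ℝ}

lemma wNorm_nonneg (hη : ∀ i, 0 < η i) (x : Fin n → ℝ) : 0 ≤ wNorm η x :=
  Real.iSup_nonneg fun i => div_nonneg (abs_nonneg _) (hη i).le

lemma abs_le_mul_wNorm (hη : ∀ i, 0 < η i) (x : Fin n → ℝ) (i : Fin n) :
    |x i| ≤ η i * wNorm η x := by
  rw [← div_le_iff₀' (hη i)]
  exact le_ciSup (f := fun i => |x i| / η i) (Set.finite_range _).bddAbove i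

lemma exists_abs_eq_mul_wNorm [Nonempty (Fin n)] (hη : ∀ i, 0 < η i) (x : Fin n → ℝ) :
    ∃ i, |x i| = η i * wNorm η x := by
  obtain ⟨i, hi⟩ := exists_eq_ciSup_of_finite (f := fun i => |x i| / η i)
  exact ⟨i, by rw [wNorm, ← hi, mul_div_cancel₀ _ (hη i).ne']⟩

lemma tendsto_of_tendsto_wNorm_sub {ι : Type*} {l : Filter ι} (hη : ∀ i, 0 < η i)
    {x : ι → Fin n → ℝ} {y : Fin n → ℝ}
    (h : Tendsto (fun k => wNorm η (x k - y)) l (nhds 0)) : Tendsto x l (nhds y) := by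
  rw [tendsto_pi_nhds]
  intro i
  rw [tendsto_iff_norm_sub_tendsto_zero]
  refine squeeze_zero (fun k => norm_nonneg _) (fun k => abs_le_mul_wNorm hη (x k - y) i) ?_
  simpa using h.const_mul (η i)

end WeightedNorm

section StrongMonotonicity

open Matrix

variable {n : ℕ} {η : Fin n → ℝ} {c : ℝ}

lemma mul_sq_le_mul_mulVec_of_logNorm_neg_le (hη : ∀ i, 0 < η i)
    {A : Matrix (Fin n) (Fin n) ℝ} (hA : logNorm η (-A) ≤ -c)
    {u : Fin n → ℝ} {i : Fin n} (hi : |u i| = η i * wNorm η u) :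
    c * u i ^ 2 ≤ u i * (A *ᵥ u) i := by
  set S := ∑ j ∈ Finset.univ.erase i, η j / η i * |A i j|
  have hrow : S ≤ A i i - c := by
    have h := (le_ciSup (Set.finite_range
      fun i => (-A) i i + ∑ j ∈ Finset.univ.erase i, η j / η i * |(-A) i j|).bddAbove i).trans hA
    simp only [Matrix.neg_apply, abs_neg] at h
    linarith
  have hoff : ∀ j, |u i * (A i j * u j)| ≤ u i ^ 2 * (η j / η i * |A i j|) := by
    intro j
    have huj : |u j| ≤ η j * |u i| / η i := by
      rw [hi, mul_div_assoc, mul_div_cancel_left₀ _ (hη i).ne']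
      exact abs_le_mul_wNorm hη u j
    calc |u i * (A i j * u j)| = |u i| * |A i j| * |u j| := by rw [abs_mul, abs_mul, mul_assoc]
      _ ≤ |u i| * |A i j| * (η j * |u i| / η i) := by gcongr
      _ = u i ^ 2 * (η j / η i * |A i j|) := by rw [← sq_abs (u i)]; ring
  have hsum : -(u i ^ 2 * S) ≤ ∑ j ∈ Finset.univ.erase i, u i * (A i j * u j) := by
    rw [Finset.mul_sum, neg_le]
    refine (neg_le_abs _).trans ((Finset.abs_sum_le_sum_abs _ _).trans ?_)
    exact Finset.sum_le_sum fun j _ => hoff j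
  have hsplit : u i * (A *ᵥ u) i =
      A i i * u i ^ 2 + ∑ j ∈ Finset.univ.erase i, u i * (A i j * u j) := by
    rw [Matrix.mulVec, dotProduct, Finset.mul_sum, ← Finset.add_sum_erase _ _ (Finset.mem_univ i)]
    ring
  nlinarith [mul_le_mul_of_nonneg_left hrow (sq_nonneg (u i))]

lemma jac_mulVec (F : (Fin n → ℝ) → (Fin n → ℝ)) (x u : Fin n → ℝ) :
    jac F x *ᵥ u = fderiv ℝ F x u :=
  LinearMap.toMatrix'_mulVec (fderiv ℝ F x : (Fin n → ℝ) →ₗ[ℝ] Fin n → ℝ) u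

lemma mul_sq_le_mul_sub_of_logNorm_jac_le (hη : ∀ i, 0 < η i)
    {F : (Fin n → ℝ) → (Fin n → ℝ)} (hF : Differentiable ℝ F)
    (hmono : ∀ x, logNorm η (-(jac F x)) ≤ -c) (y z : Fin n → ℝ) {i : Fin n}
    (hi : |(y - z) i| = η i * wNorm η (y - z)) :
    c * (y - z) i ^ 2 ≤ (y - z) i * (F y - F z) i := by
  set u := y - z
  have hderiv : ∀ t : ℝ, HasDerivAt (fun t : ℝ => u i * F (z + t • u) i)
      (u i * (jac F (z + t • u) *ᵥ u) i) t := by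
    intro t
    have hline : HasDerivAt (fun t : ℝ => z + t • u) u t := by
      simpa using ((hasDerivAt_id t).smul_const u).const_add z
    rw [jac_mulVec]
    exact (hasDerivAt_pi.1 ((hF _).hasFDerivAt.comp_hasDerivAt t hline) i).const_mul (u i)
  have h := mul_sub_le_image_sub_of_le_deriv (fun t => (hderiv t).differentiableAt)
    (fun t => (hderiv t).deriv ▸ mul_sq_le_mul_mulVec_of_logNorm_neg_le hη (hmono _) hi)
    zero_le_one
  simpa [u, mul_sub] using h

lemma mul_wNorm_le_wNorm_sub_add_smul (hη : ∀ i, 0 < η i)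
    {F : (Fin n → ℝ) → (Fin n → ℝ)} (hF : Differentiable ℝ F)
    (hmono : ∀ x, logNorm η (-(jac F x)) ≤ -c) {α : ℝ} (hα : 0 ≤ α) (y z : Fin n → ℝ) :
    (1 + α * c) * wNorm η (y - z) ≤ wNorm η (y - z + α • (F y - F z)) := by
  rcases isEmpty_or_nonempty (Fin n) with _ | _
  · simp [wNorm]
  obtain ⟨i, hi⟩ := exists_abs_eq_mul_wNorm hη (y - z)
  set u := y - z
  set v := u + α • (F y - F z)
  have hgrowth : (1 + α * c) * |u i| * |u i| ≤ |v i| * |u i| :=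
    calc (1 + α * c) * |u i| * |u i| = u i ^ 2 + α * (c * u i ^ 2) := by
          rw [mul_assoc, ← sq, sq_abs]; ring
      _ ≤ u i ^ 2 + α * (u i * (F y - F z) i) := by
          gcongr u i ^ 2 + α * ?_
          exact mul_sq_le_mul_sub_of_logNorm_jac_le hη hF hmono y z hi
      _ = u i * v i := by simp only [v, Pi.add_apply, Pi.smul_apply, smul_eq_mul]; ring
      _ ≤ |v i| * |u i| := by rw [mul_comm, ← abs_mul]; exact le_abs_self _
  rcases (abs_nonneg (u i)).eq_or_lt with hu | hu
  · have hM : wNorm η u = 0 := by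
      simpa [(hη i).ne'] using hi.symm.trans hu.symm
    rw [hM, mul_zero]
    exact wNorm_nonneg hη v
  · have hvi := (le_of_mul_le_mul_right hgrowth hu).trans (abs_le_mul_wNorm hη v i)
    rw [hi, mul_left_comm] at hvi
    exact le_of_mul_le_mul_left hvi (hη i)

end StrongMonotonicity

/-- Proximal point method: strongly monotone case. -/
theorem stmt_9 {n : ℕ} (η : Fin n → ℝ) (hη : ∀ i, 0 < η i)
    (F : (Fin n → ℝ) → (Fin n → ℝ)) (hF : ContDiff ℝ 1 F)
    (c : ℝ) (hc : 0 < c) (hmono : ∀ x, logNorm η (-(jac F x)) ≤ -c)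
    (xs : Fin n → ℝ) (hxs : F xs = 0)
    (α : ℝ) (hα : 0 < α)
    (x : ℕ → (Fin n → ℝ)) (hx : ∀ k, x (k + 1) + α • F (x (k + 1)) = x k) :
    (∀ k, wNorm η (x (k + 1) - xs) ≤ (1 / (1 + α * c)) * wNorm η (x k - xs)) ∧
    Tendsto x atTop (nhds xs) := by
  have hpos : 0 < 1 + α * c := by positivity
  have hstep : ∀ k, wNorm η (x (k + 1) - xs) ≤ (1 / (1 + α * c)) * wNorm η (x k - xs) := by
    intro k
    have h := mul_wNorm_le_wNorm_sub_add_smul hη (hF.differentiable one_ne_zero) hmono hα.le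
      (x (k + 1)) xs
    have hiterate : x (k + 1) - xs + α • (F (x (k + 1)) - F xs) = x k - xs := by
      rw [hxs, sub_zero, ← hx k]
      abel
    rw [hiterate] at h
    rwa [one_div_mul_eq_div, le_div_iff₀' hpos]
  refine ⟨hstep, tendsto_of_tendsto_wNorm_sub hη ?_⟩
  have hrate : 1 / (1 + α * c) < 1 := (div_lt_one hpos).2 (lt_add_of_pos_right 1 (mul_pos hα hc))
  refine squeeze_zero (fun k => wNorm_nonneg hη _)
    (fun k => le_geom (u := fun k => wNorm η (x k - xs)) (by positivity) k fun j _ => hstep j) ?_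
  simpa using (tendsto_pow_atTop_nhds_zero_of_lt_one (by positivity) hrate).mul_const
    (wNorm η (x 0 - xs))
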